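/- Let G be a finite simple graph with no dominating vertex, and suppose that for every weakly dominating vertex z of degree 4, every neighbor of z has at most one neighbor outside N[z]. Let v be a weakly dominating vertex of degree 4 such that every u ∈ N(v) has exactly one neighbor outside N[v], the outside-neighbors of distinct vertices of N(v) are pairwise distinct, and every u ∈ N(v) has at least one neighbor in N(v). Then every u ∈ N(v) has exactly one neighbor in N(v); that is, the edges inside N(v) form a perfect matching on the four vertices of N(v). -/

import Mathlib

/-- In a graph `G`, vertex `v` dominates vertex `u` if they are adjacent and
`N(u) ⊆ N[v]`. -/
def GDominates {V : Type*} (G : SimpleGraph V) (v u : V) : Prop :=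
  G.Adj u v ∧ G.neighborSet u ⊆ insert v (G.neighborSet v)

/-- In a graph `G`, vertex `v` weakly dominates vertex `u` if they are adjacent
and there is `x ∈ N(u)` with `x ∉ N[v]` and `N(u) \ {x} ⊆ N[v]`. -/
def GWeaklyDominates {V : Type*} (G : SimpleGraph V) (v u : V) : Prop :=
  G.Adj u v ∧ ∃ x ∈ G.neighborSet u,
    x ∉ insert v (G.neighborSet v) ∧
    G.neighborSet u \ {x} ⊆ insert v (G.neighborSet v)

/-!
Fix `u ∈ N(v)` and split `N(v) = {u} ⊔ (N(u) ∩ N(v)) ⊔ T` with `T = N(v) \ N[u]`; the claim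
is `|T| ≥ 2`. If `T = ∅`, then `u` dominates `v`. If `T = {d}`, then `u` weakly dominates `v`
and has degree `1 + 2 + 1 = 4`, so every `w ∈ N(u)` has at most one neighbor outside `N[u]`.
For `w ∈ N(u) ∩ N(v)` that neighbor is the private outside-neighbor of `w` with respect to `v`
(private neighbors are pairwise distinct), so `w` is not adjacent to `d`. Hence `d` has no
neighbor in `N(v)`, a contradiction.
-/

section

variable {V : Type*} {G : SimpleGraph V} {u v w x d : V}

theorem SimpleGraph.ncard_neighborSet_eq_of_adj (h : G.Adj u v) (hf : (G.neighborSet u).Finite) :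
    (G.neighborSet u).ncard = (G.neighborSet u ∩ G.neighborSet v).ncard +
      (G.neighborSet u \ insert v (G.neighborSet v)).ncard + 1 := by
  rw [← Set.ncard_inter_add_ncard_sdiff_eq_ncard _ (insert v (G.neighborSet v)) hf,
    Set.inter_insert_of_mem (show v ∈ G.neighborSet u from h),
    Set.ncard_insert_of_notMem (show v ∉ G.neighborSet u ∩ G.neighborSet v from
      fun hv => G.irrefl hv.2) (hf.inter_of_left _)]
  omega

theorem gWeaklyDominates_of_sdiff_eq_singleton (h : G.Adj v u)
    (hd : G.neighborSet v \ insert u (G.neighborSet u) = {d}) : GWeaklyDominates G u v := by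
  have hdT := Set.singleton_subset_iff.mp hd.ge
  refine ⟨h, d, hdT.1, hdT.2, fun y ⟨hyv, hyd⟩ => ?_⟩
  by_contra hyu
  exact hyd (hd ▸ ⟨hyv, hyu⟩ : y ∈ ({d} : Set V))

theorem notMem_insert_neighborSet_of_mem_sdiff (hu : u ∈ G.neighborSet v)
    (hdisj : (G.neighborSet u \ insert v (G.neighborSet v)) ∩
      (G.neighborSet w \ insert v (G.neighborSet v)) = ∅)
    (hx : x ∈ G.neighborSet w \ insert v (G.neighborSet v)) :
    x ∉ insert u (G.neighborSet u) := by
  rintro (rfl | hxu)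
  · exact hx.2 (Set.mem_insert_of_mem _ hu)
  · exact Set.eq_empty_iff_forall_notMem.mp hdisj x ⟨⟨hxu, hx.2⟩, hx⟩

theorem neighborSet_inter_eq_empty_of_sdiff_eq_singleton (hu : u ∈ G.neighborSet v)
    (hd : G.neighborSet v \ insert u (G.neighborSet u) = {d})
    (hfin : ∀ w ∈ G.neighborSet v, (G.neighborSet w).Finite)
    (hout : ∀ w ∈ G.neighborSet u, (G.neighborSet w \ insert u (G.neighborSet u)).ncard ≤ 1)
    (hpriv : ∀ w ∈ G.neighborSet v, (G.neighborSet w \ insert v (G.neighborSet v)).Nonempty)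
    (hdistinct : ∀ w ∈ G.neighborSet v, u ≠ w →
      (G.neighborSet u \ insert v (G.neighborSet v)) ∩
        (G.neighborSet w \ insert v (G.neighborSet v)) = ∅) :
    G.neighborSet d ∩ G.neighborSet v = ∅ := by
  have hdT := Set.singleton_subset_iff.mp hd.ge
  refine Set.eq_empty_iff_forall_notMem.mpr fun y ⟨hdy, hyv⟩ => ?_
  by_cases hyT : y ∈ G.neighborSet v \ insert u (G.neighborSet u)
  · rw [hd, Set.mem_singleton_iff] at hyT
    exact G.irrefl (hyT ▸ hdy)
  obtain rfl | huy : y = u ∨ G.Adj u y := by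
    simpa [hyv, or_iff_not_imp_left] using hyT
  · exact hdT.2 (Set.mem_insert_of_mem _ (G.adj_symm hdy))
  obtain ⟨x, hx⟩ := hpriv y hyv
  have hxu := notMem_insert_neighborSet_of_mem_sdiff hu (hdistinct y hyv (G.ne_of_adj huy)) hx
  have hxd : x ≠ d := fun h => hx.2 (h ▸ Set.mem_insert_of_mem _ hdT.1)
  exact hxd <| (Set.ncard_le_one (hfin y hyv).sdiff).mp (hout y huy)
    x ⟨hx.1, hxu⟩ d ⟨G.adj_symm hdy, hdT.2⟩

end

theorem matching_inside_neighborhood_general {V : Type*} (G : SimpleGraph V)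
    (hnodom : ∀ a b : V, ¬ GDominates G a b)
    (hwd4 : ∀ z : V, (∃ u, GWeaklyDominates G z u) → (G.neighborSet z).ncard = 4 →
      ∀ w ∈ G.neighborSet z,
        (G.neighborSet w \ insert z (G.neighborSet z)).ncard ≤ 1)
    (v : V)
    (hdv : (G.neighborSet v).ncard = 4)
    (hone : ∀ u ∈ G.neighborSet v,
      (G.neighborSet u \ insert v (G.neighborSet v)).ncard = 1)
    (hdistinct : ∀ u w : V, u ∈ G.neighborSet v → w ∈ G.neighborSet v → u ≠ w →
      (G.neighborSet u \ insert v (G.neighborSet v)) ∩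
        (G.neighborSet w \ insert v (G.neighborSet v)) = ∅)
    (hin : ∀ u ∈ G.neighborSet v, (G.neighborSet u ∩ G.neighborSet v).Nonempty) :
    ∀ u ∈ G.neighborSet v, (G.neighborSet u ∩ G.neighborSet v).ncard = 1 := by
  intro u hu
  have hfin_v : (G.neighborSet v).Finite := Set.finite_of_ncard_ne_zero (by omega)
  have hfin : ∀ w ∈ G.neighborSet v, (G.neighborSet w).Finite := fun w hw =>
    (Set.finite_of_ncard_ne_zero (by simp [hone w hw])).of_sdiff (hfin_v.insert v)
  have hsplit_v := G.ncard_neighborSet_eq_of_adj hu hfin_v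
  have hsplit_u := G.ncard_neighborSet_eq_of_adj (G.adj_symm hu) (hfin u hu)
  rw [Set.inter_comm] at hsplit_v
  have hS := (Set.ncard_pos ((hfin u hu).inter_of_left _)).mpr (hin u hu)
  obtain hT | hT | hT : (G.neighborSet v \ insert u (G.neighborSet u)).ncard = 0 ∨
      (G.neighborSet v \ insert u (G.neighborSet u)).ncard = 1 ∨
      2 ≤ (G.neighborSet v \ insert u (G.neighborSet u)).ncard := by omega
  · have hT_empty := (Set.ncard_eq_zero hfin_v.sdiff).mp hT
    exact (hnodom u v ⟨hu, Set.sdiff_eq_empty.mp hT_empty⟩).elim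
  · obtain ⟨d, hd⟩ := Set.ncard_eq_one.mp hT
    have hdeg : (G.neighborSet u).ncard = 4 := by rw [hsplit_u, hone u hu]; omega
    have hout := hwd4 u ⟨v, gWeaklyDominates_of_sdiff_eq_singleton hu hd⟩ hdeg
    have hd_isolated := neighborSet_inter_eq_empty_of_sdiff_eq_singleton hu hd hfin hout
      (fun w hw => Set.nonempty_of_ncard_ne_zero (by simp [hone w hw]))
      (fun w hw => hdistinct u w hu hw)
    exact absurd hd_isolated (hin d (Set.singleton_subset_iff.mp hd.ge).1).ne_empty
  · omega

/-- If `G` has no dominating vertex, every neighbor of a degree-4 weakly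
dominating vertex `z` has at most one neighbor outside `N[z]`, and `v` is a
weakly dominating vertex of degree 4 such that every `u ∈ N(v)` has exactly one
neighbor outside `N[v]`, these outside-neighbors are pairwise distinct, and
every `u ∈ N(v)` has at least one neighbor in `N(v)`, then every `u ∈ N(v)`
has exactly one neighbor in `N(v)`. -/
theorem matching_inside_neighborhood {V : Type*} [Fintype V] (G : SimpleGraph V)
    (hnodom : ∀ a b : V, ¬ GDominates G a b)
    (hwd4 : ∀ z : V, (∃ u, GWeaklyDominates G z u) → (G.neighborSet z).ncard = 4 →
      ∀ w ∈ G.neighborSet z,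
        (G.neighborSet w \ insert z (G.neighborSet z)).ncard ≤ 1)
    (v : V)
    (hwd : ∃ u, GWeaklyDominates G v u)
    (hdv : (G.neighborSet v).ncard = 4)
    (hone : ∀ u ∈ G.neighborSet v,
      (G.neighborSet u \ insert v (G.neighborSet v)).ncard = 1)
    (hdistinct : ∀ u w : V, u ∈ G.neighborSet v → w ∈ G.neighborSet v → u ≠ w →
      (G.neighborSet u \ insert v (G.neighborSet v)) ∩
        (G.neighborSet w \ insert v (G.neighborSet v)) = ∅)
    (hin : ∀ u ∈ G.neighborSet v, (G.neighborSet u ∩ G.neighborSet v).Nonempty) :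
    ∀ u ∈ G.neighborSet v, (G.neighborSet u ∩ G.neighborSet v).ncard = 1 :=
  matching_inside_neighborhood_general G hnodom hwd4 v hdv hone hdistinct hin
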